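/- arXiv:0710.4295 — 9 statements merged into one kernel-verified Lean document; each statement's English description precedes it below -/
import Mathlib

section
/- Let δ, γ ∈ ℂ and let (x, y, z) be a solution of the reduced three-wave interaction system (1) on a connected open set U ⊆ ℂ with x(t) ≠ 0 for all t ∈ U. Define X = 1/x, Y = y, Z = z/x². Then for all t ∈ U: dX/dt = 2Y²X² − δYX² − γX − Z, X·dY/dt = 2Y − δ + γXY, and X·dZ/dt = −2Z(1 + Z) − XZ(2 + 2γ − 4XY² + 2δXY). Moreover, the common zeros on the plane X = 0 of the polynomials 2Y − δ + γXY and −2Z(1+Z) − XZ(2 + 2γ − 4XY² + 2δXY) are exactly the two points (0, δ/2, 0) and (0, δ/2, −1). -/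
open Complex

noncomputable section

/-- A solution of the reduced three-wave interaction dynamical system (1)
on a set `U ⊆ ℂ`, with parameters `δ γ : ℂ`. -/
def solTWI (δ γ : ℂ) (x y z : ℂ → ℂ) (U : Set ℂ) : Prop :=
  ∀ t ∈ U,
    HasDerivAt x (-2 * (y t) ^ 2 + γ * x t + δ * y t + z t) t ∧
    HasDerivAt y (2 * x t * y t - δ * x t + γ * y t) t ∧
    HasDerivAt z (-2 * x t * z t - 2 * z t) t

section Chart

variable {δ γ t : ℂ} {x y z : ℂ → ℂ}

theorem hasDerivAt_one_div_of_solTWI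
    (hx' : HasDerivAt x (-2 * (y t) ^ 2 + γ * x t + δ * y t + z t) t) (hxt : x t ≠ 0) :
    HasDerivAt (fun s => 1 / x s)
      (2 * (y t) ^ 2 * (1 / x t) ^ 2 - δ * y t * (1 / x t) ^ 2 - γ * (1 / x t)
        - z t / (x t) ^ 2) t := by
  simp only [one_div]
  refine (hx'.fun_inv hxt).congr_deriv ?_
  field_simp
  ring

theorem one_div_mul_solTWI_y_deriv (hxt : x t ≠ 0) :
    1 / x t * (2 * x t * y t - δ * x t + γ * y t) = 2 * y t - δ + γ * (1 / x t) * y t := by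
  field_simp

theorem exists_hasDerivAt_div_sq_of_solTWI
    (hx' : HasDerivAt x (-2 * (y t) ^ 2 + γ * x t + δ * y t + z t) t)
    (hz' : HasDerivAt z (-2 * x t * z t - 2 * z t) t) (hxt : x t ≠ 0) :
    ∃ d, HasDerivAt (fun s => z s / (x s) ^ 2) d t ∧
      1 / x t * d =
        -2 * (z t / (x t) ^ 2) * (1 + z t / (x t) ^ 2)
          - 1 / x t * (z t / (x t) ^ 2) *
            (2 + 2 * γ - 4 * (1 / x t) * (y t) ^ 2 + 2 * δ * (1 / x t) * y t) := by
  refine ⟨_, hz'.div (hx'.pow 2) (pow_ne_zero 2 hxt), ?_⟩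
  field_simp
  ring

end Chart

theorem neg_two_mul_mul_one_add_eq_zero_iff {Z : ℂ} : -2 * Z * (1 + Z) = 0 ↔ Z = 0 ∨ Z = -1 := by
  rw [mul_eq_zero, mul_eq_zero, add_eq_zero_iff_eq_neg']
  simp

theorem solTWI_chart_zeros_at_X_eq_zero (δ γ : ℂ) :
    {P : ℂ × ℂ × ℂ | P.1 = 0 ∧
        2 * P.2.1 - δ + γ * P.1 * P.2.1 = 0 ∧
        -2 * P.2.2 * (1 + P.2.2)
          - P.1 * P.2.2 * (2 + 2 * γ - 4 * P.1 * P.2.1 ^ 2 + 2 * δ * P.1 * P.2.1) = 0} =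
      {(0, δ / 2, 0), (0, δ / 2, -1)} := by
  ext ⟨X, Y, Z⟩
  have hY : 2 * Y - δ = 0 ↔ Y = δ / 2 := by
    rw [sub_eq_zero, eq_div_iff two_ne_zero, mul_comm]
  simp only [Set.mem_ofPred_eq, Set.mem_insert_iff, Set.mem_singleton_iff, Prod.mk.injEq]
  constructor
  · rintro ⟨rfl, hY₀, hZ₀⟩
    simp only [mul_zero, zero_mul, add_zero, sub_zero] at hY₀ hZ₀
    rcases neg_two_mul_mul_one_add_eq_zero_iff.mp hZ₀ with hZ | hZ
    · exact Or.inl ⟨rfl, hY.mp hY₀, hZ⟩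
    · exact Or.inr ⟨rfl, hY.mp hY₀, hZ⟩
  · rintro (⟨rfl, rfl, rfl⟩ | ⟨rfl, rfl, rfl⟩) <;> exact ⟨rfl, by ring, by ring⟩

theorem stmt1_general (δ γ : ℂ) (U : Set ℂ)
    (x y z : ℂ → ℂ) (hsol : solTWI δ γ x y z U) (hx : ∀ t ∈ U, x t ≠ 0) :
    (∀ t ∈ U,
      HasDerivAt (fun s => 1 / x s)
        (2 * (y t) ^ 2 * (1 / x t) ^ 2 - δ * y t * (1 / x t) ^ 2 - γ * (1 / x t)
          - z t / (x t) ^ 2) t ∧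
      (∃ d, HasDerivAt y d t ∧
        (1 / x t) * d = 2 * y t - δ + γ * (1 / x t) * y t) ∧
      (∃ d, HasDerivAt (fun s => z s / (x s) ^ 2) d t ∧
        (1 / x t) * d =
          -2 * (z t / (x t) ^ 2) * (1 + z t / (x t) ^ 2)
            - (1 / x t) * (z t / (x t) ^ 2) *
              (2 + 2 * γ - 4 * (1 / x t) * (y t) ^ 2 + 2 * δ * (1 / x t) * y t))) ∧
    {P : ℂ × ℂ × ℂ | P.1 = 0 ∧
        2 * P.2.1 - δ + γ * P.1 * P.2.1 = 0 ∧
        -2 * P.2.2 * (1 + P.2.2)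
          - P.1 * P.2.2 * (2 + 2 * γ - 4 * P.1 * P.2.1 ^ 2 + 2 * δ * P.1 * P.2.1) = 0} =
      {(0, δ / 2, 0), (0, δ / 2, -1)} := by
  refine ⟨fun t ht => ?_, solTWI_chart_zeros_at_X_eq_zero δ γ⟩
  obtain ⟨hx', hy', hz'⟩ := hsol t ht
  exact ⟨hasDerivAt_one_div_of_solTWI hx' (hx t ht),
    ⟨_, hy', one_div_mul_solTWI_y_deriv (hx t ht)⟩,
    exists_hasDerivAt_div_sq_of_solTWI hx' hz' (hx t ht)⟩

theorem stmt1 (δ γ : ℂ) (U : Set ℂ) (hU : IsOpen U) (hUc : IsConnected U)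
    (x y z : ℂ → ℂ) (hsol : solTWI δ γ x y z U) (hx : ∀ t ∈ U, x t ≠ 0) :
    (∀ t ∈ U,
      HasDerivAt (fun s => 1 / x s)
        (2 * (y t) ^ 2 * (1 / x t) ^ 2 - δ * y t * (1 / x t) ^ 2 - γ * (1 / x t)
          - z t / (x t) ^ 2) t ∧
      (∃ d, HasDerivAt y d t ∧
        (1 / x t) * d = 2 * y t - δ + γ * (1 / x t) * y t) ∧
      (∃ d, HasDerivAt (fun s => z s / (x s) ^ 2) d t ∧
        (1 / x t) * d =
          -2 * (z t / (x t) ^ 2) * (1 + z t / (x t) ^ 2)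
            - (1 / x t) * (z t / (x t) ^ 2) *
              (2 + 2 * γ - 4 * (1 / x t) * (y t) ^ 2 + 2 * δ * (1 / x t) * y t))) ∧
    {P : ℂ × ℂ × ℂ | P.1 = 0 ∧
        2 * P.2.1 - δ + γ * P.1 * P.2.1 = 0 ∧
        -2 * P.2.2 * (1 + P.2.2)
          - P.1 * P.2.2 * (2 + 2 * γ - 4 * P.1 * P.2.1 ^ 2 + 2 * δ * P.1 * P.2.1) = 0} =
      {(0, δ / 2, 0), (0, δ / 2, -1)} :=
  stmt1_general δ γ U x y z hsol hx
end
end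

section
/- Let δ, γ ∈ ℂ, let t₁ ∈ ℂ, and let (x, y, z) be a solution of the reduced three-wave interaction system (1) holomorphic on a punctured disc around t₁ such that x, y, z all extend meromorphically to t₁, y is holomorphic at t₁, and x and z each have a pole at t₁, of orders m ≥ 1 and p ≥ 1 respectively. Then m = 1, p = 2, the leading Laurent coefficient of x at t₁ is 1 (i.e. lim_{t→t₁} (t−t₁)x(t) = 1), the leading Laurent coefficient of z at t₁ is −1 (i.e. lim_{t→t₁} (t−t₁)²z(t) = −1), and y(t₁) = δ/2. -/
open Complex Filter

noncomputable section

/-!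
Clearing denominators, each equation of (1) becomes an identity `(t - t₁)^i A = (t - t₁)^j B`
near `t₁` between functions continuous and nonzero at `t₁`, which forces `i = j` and
`A t₁ = B t₁` (dominant balance). In the `z`-equation `z'/z ~ -p/(t - t₁)` balances `-2x`,
so `m = 1` and `2 X t₁ = p`; in the `x`-equation `x' ~ -X/(t - t₁)²` then balances `z`, so
`p = 2` and `Z t₁ = -X t₁`; the `y`-equation times `t - t₁` gives `(2 Y t₁ - δ) X t₁ = 0`.
-/

open Topology

theorem ContinuousAt.eq_of_eventuallyEq_nhdsNE {α β : Type*} [TopologicalSpace α]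
    [TopologicalSpace β] [T2Space β] {f g : α → β} {a : α} [(𝓝[≠] a).NeBot]
    (hf : ContinuousAt f a) (hg : ContinuousAt g a) (hfg : f =ᶠ[𝓝[≠] a] g) : f a = g a :=
  tendsto_nhds_unique_of_eventuallyEq (hf.mono_left nhdsWithin_le_nhds)
    (hg.mono_left nhdsWithin_le_nhds) hfg

theorem eq_and_eq_of_sub_pow_mul_eventuallyEq {𝕜 : Type*} [Field 𝕜] [TopologicalSpace 𝕜]
    [IsTopologicalRing 𝕜] [T2Space 𝕜] {A B : 𝕜 → 𝕜} {a : 𝕜} [(𝓝[≠] a).NeBot] {i j : ℕ}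
    (hA : ContinuousAt A a) (hB : ContinuousAt B a) (hA0 : A a ≠ 0) (hB0 : B a ≠ 0)
    (h : ∀ᶠ t in 𝓝[≠] a, (t - a) ^ i * A t = (t - a) ^ j * B t) : i = j ∧ A a = B a := by
  wlog hij : i ≤ j generalizing i j A B
  · obtain ⟨hji, hBA⟩ := this hB hA hB0 hA0 (h.mono fun _ ht => ht.symm) (by omega)
    exact ⟨hji.symm, hBA.symm⟩
  obtain ⟨d, rfl⟩ := Nat.exists_eq_add_of_le hij
  have hcancel : A =ᶠ[𝓝[≠] a] fun t => (t - a) ^ d * B t := by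
    filter_upwards [h, self_mem_nhdsWithin] with t ht hta
    have hs : (t - a) ^ i ≠ 0 := pow_ne_zero _ (sub_ne_zero.2 hta)
    exact mul_left_cancel₀ hs (by rw [ht]; ring)
  have hAa : A a = 0 ^ d * B a := by
    simpa using hA.eq_of_eventuallyEq_nhdsNE (by fun_prop) hcancel
  rcases d with _ | d
  · simpa using hAa
  · simp [hA0] at hAa

theorem HasDerivAt.mul_sub_pow_eq_of_eventuallyEq_div {𝕜 : Type*} [NontriviallyNormedField 𝕜]
    {f F : 𝕜 → 𝕜} {f' F' a t : 𝕜} {n : ℕ} (hf : HasDerivAt f f' t) (hF : HasDerivAt F F' t)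
    (hfF : f =ᶠ[𝓝 t] fun u => F u / (u - a) ^ n) (ht : t ≠ a) :
    f' * (t - a) ^ (n + 1) = F' * (t - a) - n * F t := by
  have hs : t - a ≠ 0 := sub_ne_zero.2 ht
  have hpow : HasDerivAt (fun u => (u - a) ^ n) (n * (t - a) ^ (n - 1)) t := by
    simpa using ((hasDerivAt_id t).sub_const a).fun_pow n
  rw [hf.unique ((hF.div hpow (pow_ne_zero n hs)).congr_of_eventuallyEq hfF)]
  rcases n with _ | n
  · simp
  · field_simp
    simp only [Nat.add_sub_cancel]
    ring

section ThreeWave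

variable {δ γ t₁ : ℂ} {r : ℝ} {x y z X Y Z : ℂ → ℂ} {m p : ℕ}

theorem solTWI.z_balance (hr : 0 < r) (hsol : solTWI δ γ x y z (Metric.ball t₁ r \ {t₁}))
    (hZ : DifferentiableOn ℂ Z (Metric.ball t₁ r))
    (hxX : ∀ t ∈ Metric.ball t₁ r \ {t₁}, x t = X t / (t - t₁) ^ m)
    (hzZ : ∀ t ∈ Metric.ball t₁ r \ {t₁}, z t = Z t / (t - t₁) ^ p) :
    ∀ᶠ t in 𝓝[≠] t₁, (t - t₁) ^ 1 * (2 * X t * Z t) =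
      (t - t₁) ^ m * (p * Z t - deriv Z t * (t - t₁) - 2 * (t - t₁) * Z t) := by
  have hU : IsOpen (Metric.ball t₁ r \ {t₁}) := Metric.isOpen_ball.sdiff isClosed_singleton
  filter_upwards [sdiff_mem_nhdsWithin_compl (Metric.ball_mem_nhds t₁ hr) _] with t ht
  have hZt := (hZ.differentiableAt (Metric.isOpen_ball.mem_nhds ht.1)).hasDerivAt
  have hz := (hsol t ht).2.2.mul_sub_pow_eq_of_eventuallyEq_div hZt
    (eventually_of_mem (hU.mem_nhds ht) hzZ) ht.2
  have hs : t - t₁ ≠ 0 := sub_ne_zero.2 ht.2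
  rw [hxX t ht, hzZ t ht] at hz
  linear_combination (norm := skip) (-(t - t₁) ^ m) * hz
  field_simp
  ring

theorem solTWI.x_balance (hr : 0 < r) (hsol : solTWI δ γ x y z (Metric.ball t₁ r \ {t₁}))
    (hX : DifferentiableOn ℂ X (Metric.ball t₁ r))
    (hxX : ∀ t ∈ Metric.ball t₁ r \ {t₁}, x t = X t / (t - t₁))
    (hyY : ∀ t ∈ Metric.ball t₁ r \ {t₁}, y t = Y t)
    (hzZ : ∀ t ∈ Metric.ball t₁ r \ {t₁}, z t = Z t / (t - t₁) ^ p) :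
    ∀ᶠ t in 𝓝[≠] t₁, (t - t₁) ^ p * (deriv X t * (t - t₁) - X t -
        (δ * Y t - 2 * Y t ^ 2) * (t - t₁) ^ 2 - γ * X t * (t - t₁)) = (t - t₁) ^ 2 * Z t := by
  have hU : IsOpen (Metric.ball t₁ r \ {t₁}) := Metric.isOpen_ball.sdiff isClosed_singleton
  filter_upwards [sdiff_mem_nhdsWithin_compl (Metric.ball_mem_nhds t₁ hr) _] with t ht
  have hXt := (hX.differentiableAt (Metric.isOpen_ball.mem_nhds ht.1)).hasDerivAt
  have hx := (hsol t ht).1.mul_sub_pow_eq_of_eventuallyEq_div (n := 1) hXt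
    (eventually_of_mem (hU.mem_nhds ht) fun u hu => by simp [hxX u hu]) ht.2
  have hs : t - t₁ ≠ 0 := sub_ne_zero.2 ht.2
  rw [hxX t ht, hyY t ht, hzZ t ht] at hx
  linear_combination (norm := skip) (-(t - t₁) ^ p) * hx
  field_simp
  ring

theorem solTWI.y_balance (hr : 0 < r) (hsol : solTWI δ γ x y z (Metric.ball t₁ r \ {t₁}))
    (hY : DifferentiableOn ℂ Y (Metric.ball t₁ r))
    (hxX : ∀ t ∈ Metric.ball t₁ r \ {t₁}, x t = X t / (t - t₁))
    (hyY : ∀ t ∈ Metric.ball t₁ r \ {t₁}, y t = Y t) :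
    ∀ᶠ t in 𝓝[≠] t₁, (2 * Y t - δ) * X t = (deriv Y t - γ * Y t) * (t - t₁) := by
  have hU : IsOpen (Metric.ball t₁ r \ {t₁}) := Metric.isOpen_ball.sdiff isClosed_singleton
  filter_upwards [sdiff_mem_nhdsWithin_compl (Metric.ball_mem_nhds t₁ hr) _] with t ht
  have hYt := (hY.differentiableAt (Metric.isOpen_ball.mem_nhds ht.1)).hasDerivAt
  have hy := (hsol t ht).2.1.unique
    (hYt.congr_of_eventuallyEq (eventually_of_mem (hU.mem_nhds ht) hyY))
  have hs : t - t₁ ≠ 0 := sub_ne_zero.2 ht.2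
  rw [hxX t ht, hyY t ht] at hy
  field_simp at hy
  linear_combination hy

end ThreeWave

theorem stmt2_general (δ γ : ℂ) (t₁ : ℂ) (r : ℝ) (hr : 0 < r)
    (x y z : ℂ → ℂ) (m p : ℕ) (hp : 1 ≤ p)
    (hsol : solTWI δ γ x y z (Metric.ball t₁ r \ {t₁}))
    -- `x`, `y`, `z` extend meromorphically to `t₁`: `y` is holomorphic at `t₁`,
    -- `x` has a pole of order `m` and `z` a pole of order `p` at `t₁`.
    (X Y Z : ℂ → ℂ)
    (hX : DifferentiableOn ℂ X (Metric.ball t₁ r))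
    (hY : DifferentiableOn ℂ Y (Metric.ball t₁ r))
    (hZ : DifferentiableOn ℂ Z (Metric.ball t₁ r))
    (hX0 : X t₁ ≠ 0) (hZ0 : Z t₁ ≠ 0)
    (hxX : ∀ t ∈ Metric.ball t₁ r \ {t₁}, x t = X t / (t - t₁) ^ m)
    (hyY : ∀ t ∈ Metric.ball t₁ r \ {t₁}, y t = Y t)
    (hzZ : ∀ t ∈ Metric.ball t₁ r \ {t₁}, z t = Z t / (t - t₁) ^ p) :
    m = 1 ∧ p = 2 ∧
    Tendsto (fun t => (t - t₁) * x t) (nhdsWithin t₁ {t₁}ᶜ) (nhds 1) ∧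
    Tendsto (fun t => (t - t₁) ^ 2 * z t) (nhdsWithin t₁ {t₁}ᶜ) (nhds (-1)) ∧
    Y t₁ = δ / 2 := by
  have hcont : ∀ F : ℂ → ℂ, DifferentiableOn ℂ F (Metric.ball t₁ r) →
      ContinuousAt F t₁ ∧ ContinuousAt (deriv F) t₁ := fun F hF =>
    ⟨hF.continuousOn.continuousAt (Metric.ball_mem_nhds t₁ hr),
      (hF.deriv Metric.isOpen_ball).continuousOn.continuousAt (Metric.ball_mem_nhds t₁ hr)⟩
  obtain ⟨hXc, hX'c⟩ := hcont X hX
  obtain ⟨hYc, hY'c⟩ := hcont Y hY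
  obtain ⟨hZc, hZ'c⟩ := hcont Z hZ
  obtain ⟨rfl, hXp⟩ := eq_and_eq_of_sub_pow_mul_eventuallyEq (by fun_prop) (by fun_prop)
    (by simp [hX0, hZ0]) (by simpa [hZ0] using (by omega : p ≠ 0)) (hsol.z_balance hr hZ hxX hzZ)
  simp only [pow_one] at hxX
  obtain ⟨rfl, hXZ⟩ := eq_and_eq_of_sub_pow_mul_eventuallyEq (by fun_prop) (by fun_prop)
    (by simp [hX0]) hZ0 (hsol.x_balance hr hX hxX hyY hzZ)
  have hX1 : X t₁ = 1 := by simpa [hZ0] using hXp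
  have hZ1 : Z t₁ = -1 := by simpa [hX1] using hXZ.symm
  have hY1 : Y t₁ = δ / 2 := by
    have := ContinuousAt.eq_of_eventuallyEq_nhdsNE (by fun_prop) (by fun_prop)
      (hsol.y_balance hr hY hxX hyY)
    simp only [hX1, sub_self, mul_zero, mul_one] at this
    linear_combination this / 2
  have hpunct : Metric.ball t₁ r \ {t₁} ∈ 𝓝[≠] t₁ :=
    sdiff_mem_nhdsWithin_compl (Metric.ball_mem_nhds t₁ hr) _
  refine ⟨rfl, rfl, ?_, ?_, hY1⟩
  · refine (hX1 ▸ hXc.mono_left nhdsWithin_le_nhds).congr' ?_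
    filter_upwards [hpunct] with t ht
    rw [hxX t ht, mul_div_cancel₀ _ (sub_ne_zero.2 ht.2)]
  · refine (hZ1 ▸ hZc.mono_left nhdsWithin_le_nhds).congr' ?_
    filter_upwards [hpunct] with t ht
    rw [hzZ t ht, mul_div_cancel₀ _ (pow_ne_zero _ (sub_ne_zero.2 ht.2))]

theorem stmt2 (δ γ : ℂ) (t₁ : ℂ) (r : ℝ) (hr : 0 < r)
    (x y z : ℂ → ℂ) (m p : ℕ) (hm : 1 ≤ m) (hp : 1 ≤ p)
    (hsol : solTWI δ γ x y z (Metric.ball t₁ r \ {t₁}))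
    -- `x`, `y`, `z` extend meromorphically to `t₁`: `y` is holomorphic at `t₁`,
    -- `x` has a pole of order `m` and `z` a pole of order `p` at `t₁`.
    (X Y Z : ℂ → ℂ)
    (hX : DifferentiableOn ℂ X (Metric.ball t₁ r))
    (hY : DifferentiableOn ℂ Y (Metric.ball t₁ r))
    (hZ : DifferentiableOn ℂ Z (Metric.ball t₁ r))
    (hX0 : X t₁ ≠ 0) (hZ0 : Z t₁ ≠ 0)
    (hxX : ∀ t ∈ Metric.ball t₁ r \ {t₁}, x t = X t / (t - t₁) ^ m)
    (hyY : ∀ t ∈ Metric.ball t₁ r \ {t₁}, y t = Y t)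
    (hzZ : ∀ t ∈ Metric.ball t₁ r \ {t₁}, z t = Z t / (t - t₁) ^ p) :
    m = 1 ∧ p = 2 ∧
    Tendsto (fun t => (t - t₁) * x t) (nhdsWithin t₁ {t₁}ᶜ) (nhds 1) ∧
    Tendsto (fun t => (t - t₁) ^ 2 * z t) (nhdsWithin t₁ {t₁}ᶜ) (nhds (-1)) ∧
    Y t₁ = δ / 2 :=
  stmt2_general δ γ t₁ r hr x y z m p hp hsol X Y Z hX hY hZ hX0 hZ0 hxX hyY hzZ
end
end

section
/- Let δ, γ ∈ ℂ. There exist polynomials g₁, g₂, g₃ ∈ ℂ[u, v, w] (depending only on δ and γ) such that for every solution (x, y, z) of the reduced three-wave interaction system (1) on a connected open set U ⊆ ℂ with x(t) ≠ 0 for all t ∈ U, the functions u = 1/x, v = ((y − δ/2)x + δγ/2)x, w = z + x² + 2(γ+1)x satisfy, for all t ∈ U: du/dt = g₁(u, v, w), u·dv/dt = δγ + u·g₂(u, v, w), and u·dw/dt = −2γ(γ+1) + u·g₃(u, v, w). -/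
open Complex

noncomputable section

/-!
Writing `x = 1/u`, `y = δ/2 + u²v - δγu/2` and `z = w - 1/u² - 2(γ+1)/u`, the system (1)
becomes `u' = g₁`, `v' = δγ/u + g₂`, `w' = -2γ(γ+1)/u + g₃` for polynomials `gᵢ` in `u, v, w`.
In the original coordinates the poles are the terms `δγ·x` and `-2γ(γ+1)·x` of `v'` and `w'`,
and each of the three identities is a rational identity in `x, y, z` whose only denominators
are powers of `x`.
-/

namespace ThreeWave

open MvPolynomial

/-- The chart `(u, v, w)` obtained after the two blow-ups at `P₄⁽²⁾`. -/
abbrev blowupCoords (δ γ x y z : ℂ) : Fin 3 → ℂ :=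
  ![1 / x, ((y - δ / 2) * x + δ * γ / 2) * x, z + x ^ 2 + 2 * (γ + 1) * x]

def blowupG₁ (δ γ : ℂ) : MvPolynomial (Fin 3) ℂ :=
  C 1 + C (γ + 2) * X 0 - X 0 ^ 2 * X 2 - C (δ ^ 2 * γ / 2) * X 0 ^ 3
    + C (δ ^ 2 * γ ^ 2 / 2) * X 0 ^ 4 + C δ * X 0 ^ 4 * X 1
    - C (2 * δ * γ) * X 0 ^ 5 * X 1 + C 2 * X 0 ^ 6 * X 1 ^ 2

def blowupG₂ (δ γ : ℂ) : MvPolynomial (Fin 3) ℂ :=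
  - C (δ * γ / 2) * X 2 - C (γ + 4) * X 1 - C (δ ^ 3 * γ ^ 2 / 4) * X 0
    + C 2 * X 0 * X 1 * X 2 + C (δ ^ 3 * γ ^ 3 / 4) * X 0 ^ 2
    + C (3 * δ ^ 2 * γ / 2) * X 0 ^ 2 * X 1 - C (2 * δ ^ 2 * γ ^ 2) * X 0 ^ 3 * X 1
    - C (2 * δ) * X 0 ^ 3 * X 1 ^ 2 + C (5 * δ * γ) * X 0 ^ 4 * X 1 ^ 2
    - C 4 * X 0 ^ 5 * X 1 ^ 3

def blowupG₃ (δ γ : ℂ) : MvPolynomial (Fin 3) ℂ :=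
  C (δ ^ 2 * γ) + C (2 * γ) * X 2 + C (δ ^ 2 * γ) * X 0 - C (2 * δ) * X 0 * X 1
    - C (δ ^ 2 * γ ^ 2 * (1 + γ)) * X 0 ^ 2 + C (2 * δ * (γ - 1)) * X 0 ^ 2 * X 1
    + C (4 * δ * γ * (1 + γ)) * X 0 ^ 3 * X 1 - C 4 * X 0 ^ 3 * X 1 ^ 2
    - C (4 * (1 + γ)) * X 0 ^ 4 * X 1 ^ 2

section Derivatives

variable {δ γ : ℂ} {x y z : ℂ → ℂ} {t : ℂ}

theorem hasDerivAt_blowupU (hx : HasDerivAt x (-2 * (y t) ^ 2 + γ * x t + δ * y t + z t) t)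
    (hx0 : x t ≠ 0) :
    HasDerivAt (fun s => 1 / x s) (eval (blowupCoords δ γ (x t) (y t) (z t)) (blowupG₁ δ γ)) t := by
  refine ((hasDerivAt_const t (1 : ℂ)).div hx hx0).congr_deriv ?_
  simp only [blowupG₁, blowupCoords, map_add, map_sub, map_mul, map_pow, eval_C, eval_X,
    Matrix.cons_val_zero, Matrix.cons_val_one, Matrix.cons_val]
  field_simp
  ring

theorem hasDerivAt_blowupV (hx : HasDerivAt x (-2 * (y t) ^ 2 + γ * x t + δ * y t + z t) t)
    (hy : HasDerivAt y (2 * x t * y t - δ * x t + γ * y t) t) (hx0 : x t ≠ 0) :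
    HasDerivAt (fun s => ((y s - δ / 2) * x s + δ * γ / 2) * x s)
      (δ * γ * x t + eval (blowupCoords δ γ (x t) (y t) (z t)) (blowupG₂ δ γ)) t := by
  refine ((((hy.sub_const (δ / 2)).mul hx).add_const (δ * γ / 2)).mul hx).congr_deriv ?_
  simp only [blowupG₂, blowupCoords, map_add, map_sub, map_neg, map_mul, map_pow, eval_C,
    eval_X, Matrix.cons_val_zero, Matrix.cons_val_one, Matrix.cons_val, Pi.mul_apply]
  field_simp
  ring

theorem hasDerivAt_blowupW (hx : HasDerivAt x (-2 * (y t) ^ 2 + γ * x t + δ * y t + z t) t)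
    (hz : HasDerivAt z (-2 * x t * z t - 2 * z t) t) (hx0 : x t ≠ 0) :
    HasDerivAt (fun s => z s + (x s) ^ 2 + 2 * (γ + 1) * x s)
      (-2 * γ * (γ + 1) * x t + eval (blowupCoords δ γ (x t) (y t) (z t)) (blowupG₃ δ γ)) t := by
  refine ((hz.add (hx.pow 2)).add (hx.const_mul (2 * (γ + 1)))).congr_deriv ?_
  simp only [blowupG₃, blowupCoords, map_add, map_sub, map_mul, map_pow, eval_C, eval_X,
    Matrix.cons_val_zero, Matrix.cons_val_one, Matrix.cons_val]
  field_simp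
  ring

end Derivatives

end ThreeWave

theorem stmt3 (δ γ : ℂ) :
    ∃ g₁ g₂ g₃ : MvPolynomial (Fin 3) ℂ,
      ∀ (U : Set ℂ), IsOpen U → IsConnected U →
      ∀ x y z : ℂ → ℂ, solTWI δ γ x y z U → (∀ t ∈ U, x t ≠ 0) →
      ∀ t ∈ U,
        HasDerivAt (fun s => 1 / x s)
          (MvPolynomial.eval
            ![1 / x t, ((y t - δ / 2) * x t + δ * γ / 2) * x t,
              z t + (x t) ^ 2 + 2 * (γ + 1) * x t] g₁) t ∧
        (∃ d, HasDerivAt (fun s => ((y s - δ / 2) * x s + δ * γ / 2) * x s) d t ∧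
          (1 / x t) * d =
            δ * γ + (1 / x t) *
              MvPolynomial.eval
                ![1 / x t, ((y t - δ / 2) * x t + δ * γ / 2) * x t,
                  z t + (x t) ^ 2 + 2 * (γ + 1) * x t] g₂) ∧
        (∃ d, HasDerivAt (fun s => z s + (x s) ^ 2 + 2 * (γ + 1) * x s) d t ∧
          (1 / x t) * d =
            -2 * γ * (γ + 1) + (1 / x t) *
              MvPolynomial.eval
                ![1 / x t, ((y t - δ / 2) * x t + δ * γ / 2) * x t,
                  z t + (x t) ^ 2 + 2 * (γ + 1) * x t] g₃) := by
  refine ⟨ThreeWave.blowupG₁ δ γ, ThreeWave.blowupG₂ δ γ, ThreeWave.blowupG₃ δ γ, ?_⟩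
  intro U _ _ x y z hsol hx_ne t ht
  obtain ⟨hx, hy, hz⟩ := hsol t ht
  have hxt : x t ≠ 0 := hx_ne t ht
  have hu : 1 / x t * x t = 1 := one_div_mul_cancel hxt
  exact ⟨ThreeWave.hasDerivAt_blowupU hx hxt,
    ⟨_, ThreeWave.hasDerivAt_blowupV hx hy hxt, by linear_combination δ * γ * hu⟩,
    ⟨_, ThreeWave.hasDerivAt_blowupW hx hz hxt, by linear_combination -2 * γ * (γ + 1) * hu⟩⟩
end
end

section
/- Let δ, γ ∈ ℂ. The following are equivalent: (i) there exist polynomials g₂, g₃ ∈ ℂ[u, v, w] such that for every solution (x, y, z) of the reduced three-wave interaction system (1) on any connected open set U ⊆ ℂ with x nonvanishing, the functions u = 1/x, v = ((y − δ/2)x + δγ/2)x, w = z + x² + 2(γ+1)x satisfy dv/dt = g₂(u, v, w) and dw/dt = g₃(u, v, w) on U; (ii) δγ = 0 and γ(γ+1) = 0; (iii) γ = 0, or (δ, γ) = (0, −1). -/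
/-!
Along a solution with `x ≠ 0`, a direct computation gives `v' = δγ x + P(u, v, w)` and
`w' = -2γ(γ+1) x + Q(u, v, w)` for explicit polynomials `P`, `Q`, so `(P, Q)` works when
`δγ = γ(γ+1) = 0`. Conversely, a holomorphic solution exists through every point with `x = X ≠ 0`
and `v = w = 0`; comparing derivatives there shows that `u ↦ u (g₂ - P)(u, 0, 0)` equals `δγ` for
`u ≠ 0`, hence by continuity at `u = 0` we get `δγ = 0`, and likewise `γ(γ+1) = 0`.
The local solutions come from Picard iteration in complex time: each iterate is the initial point
plus a primitive, on a disc, of a holomorphic function, and their uniform limit is holomorphic.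
-/

open Complex

noncomputable section

open Metric Filter Topology Set

section HolomorphicPicard

variable {E : Type*} [NormedAddCommGroup E] [NormedSpace ℂ E]

lemma norm_le_mul_of_hasDerivAt_ball {P g : ℂ → E} {r C : ℝ}
    (hP : ∀ t ∈ ball (0 : ℂ) r, HasDerivAt P (g t) t) (hg : ∀ t ∈ ball (0 : ℂ) r, ‖g t‖ ≤ C)
    (hP0 : P 0 = 0) {t : ℂ} (ht : t ∈ ball (0 : ℂ) r) : ‖P t‖ ≤ C * r := by
  have h0 : (0 : ℂ) ∈ ball (0 : ℂ) r := mem_ball_self (pos_of_mem_ball ht)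
  have hC : 0 ≤ C := (norm_nonneg _).trans (hg 0 h0)
  have := (convex_ball (0 : ℂ) r).norm_image_sub_le_of_norm_hasDerivWithin_le
    (fun s hs => (hP s hs).hasDerivWithinAt) hg h0 ht
  rw [hP0, sub_zero, sub_zero] at this
  exact this.trans (mul_le_mul_of_nonneg_left (mem_ball_zero_iff.mp ht).le hC)

variable [CompleteSpace E]

/-- The primitive of `g` on `ball 0 r` vanishing at `0`, when `g` has one. -/
def ballPrimitive (r : ℝ) (g : ℂ → E) : ℂ → E :=
  Classical.epsilon fun P => P 0 = 0 ∧ ∀ t ∈ ball (0 : ℂ) r, HasDerivAt P (g t) t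

lemma ballPrimitive_spec {r : ℝ} {g : ℂ → E} (hg : DifferentiableOn ℂ g (ball 0 r)) :
    ballPrimitive r g 0 = 0 ∧ ∀ t ∈ ball (0 : ℂ) r, HasDerivAt (ballPrimitive r g) (g t) t :=
  Classical.epsilon_spec (hg.isExactOn_ball.with_val_at 0 0)

def picardIterate (F : E → E) (x₀ : E) (r : ℝ) : ℕ → ℂ → E
  | 0 => fun _ => x₀
  | n + 1 => fun t => x₀ + ballPrimitive r (F ∘ picardIterate F x₀ r n) t

variable {F : E → E} {x₀ : E} {r R M : ℝ} {K : NNReal}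

lemma picardIterate_succ_spec {n : ℕ}
    (h : DifferentiableOn ℂ (F ∘ picardIterate F x₀ r n) (ball 0 r)) :
    picardIterate F x₀ r (n + 1) 0 = x₀ ∧ ∀ t ∈ ball (0 : ℂ) r,
      HasDerivAt (picardIterate F x₀ r (n + 1)) (F (picardIterate F x₀ r n t)) t := by
  obtain ⟨h0, hderiv⟩ := ballPrimitive_spec h
  exact ⟨by simp [picardIterate, h0], fun t ht => (hderiv t ht).const_add x₀⟩

lemma picardIterate_mapsTo (hR : 0 ≤ R) (hF : DifferentiableOn ℂ F (closedBall x₀ R))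
    (hM : ∀ x ∈ closedBall x₀ R, ‖F x‖ ≤ M) (hrM : r * M ≤ R) (n : ℕ) :
    MapsTo (picardIterate F x₀ r n) (ball 0 r) (closedBall x₀ R) ∧
      DifferentiableOn ℂ (picardIterate F x₀ r n) (ball 0 r) := by
  induction n with
  | zero => exact ⟨fun _ _ => mem_closedBall_self hR, differentiableOn_const x₀⟩
  | succ n ih =>
    obtain ⟨h0, hderiv⟩ := picardIterate_succ_spec (hF.comp ih.2 ih.1)
    refine ⟨fun t ht => ?_, fun t ht => (hderiv t ht).differentiableAt.differentiableWithinAt⟩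
    have := norm_le_mul_of_hasDerivAt_ball (P := fun s => picardIterate F x₀ r (n + 1) s - x₀)
      (fun s hs => (hderiv s hs).sub_const x₀) (fun s hs => hM _ (ih.1 hs)) (by simp [h0]) ht
    rw [mem_closedBall, dist_eq_norm]
    linarith

lemma norm_picardIterate_succ_sub_le (hR : 0 ≤ R) (hF : DifferentiableOn ℂ F (closedBall x₀ R))
    (hlip : LipschitzOnWith K F (closedBall x₀ R)) (hM : ∀ x ∈ closedBall x₀ R, ‖F x‖ ≤ M)
    (hrM : r * M ≤ R) (hrK : r * K ≤ 1 / 2) (n : ℕ) {t : ℂ} (ht : t ∈ ball (0 : ℂ) r) :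
    ‖picardIterate F x₀ r (n + 1) t - picardIterate F x₀ r n t‖ ≤ R * (1 / 2) ^ n := by
  have hmaps := picardIterate_mapsTo hR hF hM hrM
  induction n generalizing t with
  | zero => simpa [picardIterate, dist_eq_norm] using (hmaps 1).1 ht
  | succ n ih =>
    obtain ⟨h0, hderiv⟩ := picardIterate_succ_spec (hF.comp (hmaps n).2 (hmaps n).1)
    obtain ⟨h0', hderiv'⟩ := picardIterate_succ_spec (hF.comp (hmaps (n + 1)).2 (hmaps (n + 1)).1)
    have hK : ∀ s ∈ ball (0 : ℂ) r, ‖F (picardIterate F x₀ r (n + 1) s)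
        - F (picardIterate F x₀ r n s)‖ ≤ K * (R * (1 / 2) ^ n) := fun s hs => by
      rw [← dist_eq_norm]
      refine (hlip.dist_le_mul _ ((hmaps _).1 hs) _ ((hmaps _).1 hs)).trans ?_
      rw [dist_eq_norm]
      exact mul_le_mul_of_nonneg_left (ih hs) K.2
    have := norm_le_mul_of_hasDerivAt_ball (fun s hs => (hderiv' s hs).sub (hderiv s hs)) hK
      (by simp [h0, h0']) ht
    calc _ ≤ K * (R * (1 / 2) ^ n) * r := this
      _ = r * K * (R * (1 / 2) ^ n) := by ring
      _ ≤ 1 / 2 * (R * (1 / 2) ^ n) := by gcongr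
      _ = R * (1 / 2) ^ (n + 1) := by ring

lemma tendstoUniformlyOn_picardIterate (hR : 0 ≤ R)
    (hF : DifferentiableOn ℂ F (closedBall x₀ R)) (hlip : LipschitzOnWith K F (closedBall x₀ R))
    (hM : ∀ x ∈ closedBall x₀ R, ‖F x‖ ≤ M) (hrM : r * M ≤ R) (hrK : r * K ≤ 1 / 2) :
    ∃ ψ : ℂ → E, TendstoUniformlyOn (picardIterate F x₀ r) ψ atTop (ball 0 r) := by
  set φ := picardIterate F x₀ r
  have hsum : TendstoUniformlyOn (fun N t => ∑ n ∈ Finset.range N, (φ (n + 1) t - φ n t))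
      (fun t => ∑' n, (φ (n + 1) t - φ n t)) atTop (ball 0 r) :=
    tendstoUniformlyOn_tsum_nat (summable_geometric_two.mul_left R)
      fun n t ht => norm_picardIterate_succ_sub_le hR hF hlip hM hrM hrK n ht
  refine ⟨_, ((tendsto_const_nhds (x := x₀)).tendstoUniformlyOn_const _).add hsum |>.congr ?_⟩
  refine Eventually.of_forall fun N t _ => ?_
  change x₀ + ∑ n ∈ Finset.range N, (φ (n + 1) t - φ n t) = φ N t
  rw [Finset.sum_range_sub (fun n => φ n t)]
  exact add_sub_cancel x₀ (φ N t)

lemma exists_hasDerivAt_of_picard_bounds (hr : 0 < r) (hR : 0 ≤ R)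
    (hF : DifferentiableOn ℂ F (closedBall x₀ R)) (hlip : LipschitzOnWith K F (closedBall x₀ R))
    (hM : ∀ x ∈ closedBall x₀ R, ‖F x‖ ≤ M) (hrM : r * M ≤ R) (hrK : r * K ≤ 1 / 2) :
    ∃ ψ : ℂ → E, ψ 0 = x₀ ∧ ∀ t ∈ ball (0 : ℂ) r, HasDerivAt ψ (F (ψ t)) t := by
  obtain ⟨ψ, hlim⟩ := tendstoUniformlyOn_picardIterate hR hF hlip hM hrM hrK
  set φ := picardIterate F x₀ r
  have hmaps := picardIterate_mapsTo hR hF hM hrM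
  have hsucc n := picardIterate_succ_spec (hF.comp (hmaps n).2 (hmaps n).1)
  have hφ0 : ∀ n, φ n 0 = x₀
    | 0 => rfl
    | n + 1 => (hsucc n).1
  have hψmaps : MapsTo ψ (ball 0 r) (closedBall x₀ R) := fun t ht =>
    isClosed_closedBall.mem_of_tendsto (hlim.tendsto_at ht)
      (Eventually.of_forall fun n => (hmaps n).1 ht)
  have hdiff : ∀ᶠ n in atTop, DifferentiableOn ℂ (φ n) (ball 0 r) :=
    Eventually.of_forall fun n => (hmaps n).2
  have hψdiff := hlim.tendstoLocallyUniformlyOn.differentiableOn hdiff isOpen_ball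
  have hderiv := hlim.tendstoLocallyUniformlyOn.deriv hdiff isOpen_ball
  refine ⟨ψ, tendsto_nhds_unique (hlim.tendsto_at (mem_ball_self hr))
    (by simp only [hφ0, tendsto_const_nhds]), fun t ht => ?_⟩
  have hFφ : Tendsto (fun n => F (φ n t)) atTop (𝓝 (F (ψ t))) :=
    (hlip.continuousOn _ (hψmaps ht)).tendsto.comp (tendsto_nhdsWithin_iff.2
      ⟨hlim.tendsto_at ht, Eventually.of_forall fun n => (hmaps n).1 ht⟩)
  have hψ' : deriv ψ t = F (ψ t) :=
    tendsto_nhds_unique ((hderiv.tendsto_at ht).comp (tendsto_add_atTop_nat 1))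
      (hFφ.congr fun n => ((hsucc n).2 t ht).deriv.symm)
  rw [← hψ']
  exact (hψdiff.differentiableAt (isOpen_ball.mem_nhds ht)).hasDerivAt

theorem exists_hasDerivAt_of_lipschitzOnWith (hR : 0 < R)
    (hF : DifferentiableOn ℂ F (closedBall x₀ R)) (hlip : LipschitzOnWith K F (closedBall x₀ R)) :
    ∃ r > 0, ∃ φ : ℂ → E, φ 0 = x₀ ∧ ∀ t ∈ ball (0 : ℂ) r, HasDerivAt φ (F (φ t)) t := by
  set M := ‖F x₀‖ + K * R
  have hM : ∀ x ∈ closedBall x₀ R, ‖F x‖ ≤ M := fun x hx => by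
    have hdist : dist (F x) (F x₀) ≤ K * R :=
      (hlip.dist_le_mul x hx x₀ (mem_closedBall_self hR.le)).trans (by gcongr; exact hx)
    rw [dist_eq_norm] at hdist
    linarith [norm_le_norm_add_norm_sub' (F x) (F x₀)]
  set r := min (R / (M + 1)) (1 / (2 * (K + 1)))
  have hr : 0 < r := lt_min (by positivity) (by positivity)
  have hrM : r * M ≤ R := calc
    r * M ≤ R / (M + 1) * (M + 1) := by gcongr; exacts [min_le_left _ _, by linarith]
    _ = R := div_mul_cancel₀ _ (by positivity)
  have hrK : r * K ≤ 1 / 2 := calc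
    r * K ≤ 1 / (2 * (K + 1)) * (K + 1) := by gcongr; exacts [min_le_right _ _, by linarith]
    _ = 1 / 2 := by field_simp
  exact ⟨r, hr, exists_hasDerivAt_of_picard_bounds hr hR.le hF hlip hM hrM hrK⟩

theorem exists_hasDerivAt_of_contDiffAt (hF : ContDiffAt ℂ 1 F x₀) :
    ∃ r > 0, ∃ φ : ℂ → E, φ 0 = x₀ ∧ ∀ t ∈ ball (0 : ℂ) r, HasDerivAt φ (F (φ t)) t := by
  obtain ⟨K, s, hs, hlip⟩ := hF.exists_lipschitzOnWith
  have hdiff : ∀ᶠ x in 𝓝 x₀, DifferentiableAt ℂ F x :=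
    (hF.eventually (by simp)).mono fun x hx => hx.differentiableAt one_ne_zero
  obtain ⟨R, hR, hRs⟩ := nhds_basis_closedBall.mem_iff.1 (inter_mem hs hdiff)
  exact exists_hasDerivAt_of_lipschitzOnWith hR
    (fun x hx => (hRs hx).2.differentiableWithinAt)
    (hlip.mono fun x hx => (hRs hx).1)

end HolomorphicPicard

def twiField (δ γ : ℂ) (p : ℂ × ℂ × ℂ) : ℂ × ℂ × ℂ :=
  (-2 * p.2.1 ^ 2 + γ * p.1 + δ * p.2.1 + p.2.2, 2 * p.1 * p.2.1 - δ * p.1 + γ * p.2.1,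
    -2 * p.1 * p.2.2 - 2 * p.2.2)

lemma exists_solTWI_of_ne_zero (δ γ : ℂ) {X : ℂ} (hX : X ≠ 0) (Y Z : ℂ) :
    ∃ U : Set ℂ, IsOpen U ∧ IsConnected U ∧ 0 ∈ U ∧ ∃ x y z : ℂ → ℂ,
      solTWI δ γ x y z U ∧ (∀ t ∈ U, x t ≠ 0) ∧ x 0 = X ∧ y 0 = Y ∧ z 0 = Z := by
  obtain ⟨r, hr, φ, hφ0, hφ⟩ := exists_hasDerivAt_of_contDiffAt (F := twiField δ γ)
    (x₀ := (X, Y, Z)) (by unfold twiField; fun_prop)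
  have hx : ∀ᶠ t in 𝓝 0, (φ t).1 ≠ 0 :=
    (hφ 0 (mem_ball_self hr)).continuousAt.fst.eventually_ne (by rwa [hφ0])
  obtain ⟨ρ, hρ, hρx⟩ := Metric.eventually_nhds_iff_ball.1 hx
  have hU : 0 < min ρ r := lt_min hρ hr
  refine ⟨ball 0 (min ρ r), isOpen_ball, (convex_ball _ _).isConnected ⟨0, mem_ball_self hU⟩,
    mem_ball_self hU, fun t => (φ t).1, fun t => (φ t).2.1, fun t => (φ t).2.2,
    fun t ht => ?_, fun t ht => hρx t (ball_subset_ball (min_le_left _ _) ht), by simp [hφ0]⟩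
  have h := hφ t (ball_subset_ball (min_le_right _ _) ht)
  exact ⟨h.fst, h.snd.fst, h.snd.snd⟩

open MvPolynomial

/-- `X 0`, `X 1`, `X 2` stand for `u`, `v`, `w`; `twiYPoly` is `y - δ / 2` written in `u` and `v`. -/
def twiYPoly (δ γ : ℂ) : MvPolynomial (Fin 3) ℂ := X 0 ^ 2 * X 1 - C (δ * γ / 2) * X 0

def twiVPoly (δ γ : ℂ) : MvPolynomial (Fin 3) ℂ :=
  -C (γ + 4) * X 1 - C (δ * γ / 2) * X 2 + 2 * X 0 * X 1 * X 2
    - twiYPoly δ γ * (twiYPoly δ γ + C (δ / 2)) * (4 * X 0 * X 1 - C (δ * γ))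

def twiWPoly (δ γ : ℂ) : MvPolynomial (Fin 3) ℂ :=
  C (2 * γ) * X 2
    - 4 * (twiYPoly δ γ + C (δ / 2)) * (X 0 * X 1 - C (δ * γ / 2) + C (γ + 1) * twiYPoly δ γ)

section Derivatives

variable {δ γ : ℂ} {x y z : ℂ → ℂ} {U : Set ℂ} {t : ℂ}

lemma solTWI.hasDerivAt_v (hsol : solTWI δ γ x y z U) (ht : t ∈ U) (hx : x t ≠ 0) :
    HasDerivAt (fun s => ((y s - δ / 2) * x s + δ * γ / 2) * x s)
      (δ * γ * x t + eval ![1 / x t, ((y t - δ / 2) * x t + δ * γ / 2) * x t,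
        z t + x t ^ 2 + 2 * (γ + 1) * x t] (twiVPoly δ γ)) t := by
  obtain ⟨hx', hy', -⟩ := hsol t ht
  refine ((((hy'.sub_const (δ / 2)).mul hx').add_const (δ * γ / 2)).mul hx').congr_deriv ?_
  simp [twiVPoly, twiYPoly]
  field_simp
  ring

lemma solTWI.hasDerivAt_w (hsol : solTWI δ γ x y z U) (ht : t ∈ U) (hx : x t ≠ 0) :
    HasDerivAt (fun s => z s + x s ^ 2 + 2 * (γ + 1) * x s)
      (-2 * (γ * (γ + 1)) * x t + eval ![1 / x t, ((y t - δ / 2) * x t + δ * γ / 2) * x t,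
        z t + x t ^ 2 + 2 * (γ + 1) * x t] (twiWPoly δ γ)) t := by
  obtain ⟨hx', -, hz'⟩ := hsol t ht
  refine ((hz'.add (hx'.pow 2)).add (hx'.const_mul (2 * (γ + 1)))).congr_deriv ?_
  simp [twiWPoly, twiYPoly]
  field_simp
  ring

end Derivatives

def IsTWIResolution (δ γ : ℂ) (g₂ g₃ : MvPolynomial (Fin 3) ℂ) : Prop :=
  ∀ (U : Set ℂ), IsOpen U → IsConnected U →
    ∀ x y z : ℂ → ℂ, solTWI δ γ x y z U → (∀ t ∈ U, x t ≠ 0) →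
    ∀ t ∈ U,
      HasDerivAt (fun s => ((y s - δ / 2) * x s + δ * γ / 2) * x s)
        (eval ![1 / x t, ((y t - δ / 2) * x t + δ * γ / 2) * x t,
          z t + (x t) ^ 2 + 2 * (γ + 1) * x t] g₂) t ∧
      HasDerivAt (fun s => z s + (x s) ^ 2 + 2 * (γ + 1) * x s)
        (eval ![1 / x t, ((y t - δ / 2) * x t + δ * γ / 2) * x t,
          z t + (x t) ^ 2 + 2 * (γ + 1) * x t] g₃) t

lemma isTWIResolution_twiVPoly_twiWPoly {δ γ : ℂ} (hδγ : δ * γ = 0) (hγ : γ * (γ + 1) = 0) :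
    IsTWIResolution δ γ (twiVPoly δ γ) (twiWPoly δ γ) := fun _ _ _ _ _ _ hsol hx t ht =>
  ⟨by simpa [hδγ] using solTWI.hasDerivAt_v hsol ht (hx t ht),
    by simpa [hγ] using solTWI.hasDerivAt_w hsol ht (hx t ht)⟩

lemma IsTWIResolution.eval_eq {δ γ : ℂ} {g₂ g₃ : MvPolynomial (Fin 3) ℂ}
    (h : IsTWIResolution δ γ g₂ g₃) {X : ℂ} (hX : X ≠ 0) :
    eval ![1 / X, 0, 0] (g₂ - twiVPoly δ γ) = δ * γ * X ∧
      eval ![1 / X, 0, 0] (g₃ - twiWPoly δ γ) = -2 * (γ * (γ + 1)) * X := by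
  obtain ⟨U, hUo, hUc, hU0, x, y, z, hsol, hx, hx0, hy0, hz0⟩ :=
    exists_solTWI_of_ne_zero δ γ hX (δ / 2 - δ * γ / (2 * X)) (-X ^ 2 - 2 * (γ + 1) * X)
  have hpt : ![1 / x 0, ((y 0 - δ / 2) * x 0 + δ * γ / 2) * x 0,
      z 0 + x 0 ^ 2 + 2 * (γ + 1) * x 0] = ![1 / X, 0, 0] := by
    rw [hx0, hy0, hz0]
    field_simp
    ring_nf
  obtain ⟨hv, hw⟩ := h U hUo hUc x y z hsol hx 0 hU0
  have hv' := hv.unique (hsol.hasDerivAt_v hU0 (hx 0 hU0))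
  have hw' := hw.unique (hsol.hasDerivAt_w hU0 (hx 0 hU0))
  rw [hpt, hx0] at hv' hw'
  simp only [map_sub, hv', hw', add_sub_cancel_right, and_self]

lemma eq_zero_of_eval_inv_eq_mul {g : MvPolynomial (Fin 3) ℂ} {c : ℂ}
    (h : ∀ X : ℂ, X ≠ 0 → eval ![1 / X, 0, 0] g = c * X) : c = 0 := by
  set f : ℂ → ℂ := fun u => u * eval ![u, 0, 0] g
  have hf : Continuous f := continuous_id.mul ((continuous_eval g).comp (by fun_prop))
  have hc : Tendsto f (𝓝[≠] 0) (𝓝 c) := by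
    refine tendsto_const_nhds.congr' (eventually_nhdsWithin_of_forall fun u (hu : u ≠ 0) => ?_)
    have := h (1 / u) (one_div_ne_zero hu)
    rw [one_div_one_div] at this
    simp only [f, this]
    field_simp
  refine tendsto_nhds_unique hc ?_
  simpa [f] using (hf.tendsto 0).mono_left (nhdsWithin_le_nhds (s := {0}ᶜ))

lemma twi_condition_iff {δ γ : ℂ} :
    (δ * γ = 0 ∧ γ * (γ + 1) = 0) ↔ (γ = 0 ∨ (δ = 0 ∧ γ = -1)) := by
  constructor
  · rintro ⟨hδγ, hγ⟩
    rcases mul_eq_zero.1 hγ with hγ | hγ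
    · exact Or.inl hγ
    · have hγ : γ = -1 := eq_neg_of_add_eq_zero_left hγ
      exact Or.inr ⟨by simpa [hγ] using hδγ, hγ⟩
  · rintro (rfl | ⟨rfl, rfl⟩) <;> norm_num

theorem stmt4 (δ γ : ℂ) :
    ((∃ g₂ g₃ : MvPolynomial (Fin 3) ℂ,
        ∀ (U : Set ℂ), IsOpen U → IsConnected U →
        ∀ x y z : ℂ → ℂ, solTWI δ γ x y z U → (∀ t ∈ U, x t ≠ 0) →
        ∀ t ∈ U,
          HasDerivAt (fun s => ((y s - δ / 2) * x s + δ * γ / 2) * x s)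
            (MvPolynomial.eval
              ![1 / x t, ((y t - δ / 2) * x t + δ * γ / 2) * x t,
                z t + (x t) ^ 2 + 2 * (γ + 1) * x t] g₂) t ∧
          HasDerivAt (fun s => z s + (x s) ^ 2 + 2 * (γ + 1) * x s)
            (MvPolynomial.eval
              ![1 / x t, ((y t - δ / 2) * x t + δ * γ / 2) * x t,
                z t + (x t) ^ 2 + 2 * (γ + 1) * x t] g₃) t)
      ↔ (δ * γ = 0 ∧ γ * (γ + 1) = 0)) ∧
    ((δ * γ = 0 ∧ γ * (γ + 1) = 0) ↔ (γ = 0 ∨ (δ = 0 ∧ γ = -1))) := by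
  refine ⟨⟨fun ⟨g₂, g₃, h⟩ => ?_, fun ⟨hδγ, hγ⟩ => ⟨_, _, isTWIResolution_twiVPoly_twiWPoly hδγ hγ⟩⟩,
    twi_condition_iff⟩
  have hv := eq_zero_of_eval_inv_eq_mul fun X hX => (IsTWIResolution.eval_eq h hX).1
  have hw := eq_zero_of_eval_inv_eq_mul fun X hX => (IsTWIResolution.eval_eq h hX).2
  exact ⟨hv, by simpa using hw⟩
end
end

section
/- Let δ, γ ∈ ℂ satisfy condition (C): γ = 0, or (δ, γ) = (0, −1). There exist polynomials P₁, P₂, P₃ ∈ ℂ[X, Y, Z] (depending only on δ, γ) such that for every solution (x, y, z) of the reduced three-wave interaction system (1) on a connected open set U ⊆ ℂ with x nonvanishing, the functions x₁ = 1/x, y₁ = −(y − √−1·x)x, z₁ = zx satisfy dx₁/dt = P₁(x₁, y₁, z₁), dy₁/dt = P₂(x₁, y₁, z₁), dz₁/dt = P₃(x₁, y₁, z₁) on U. -/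
/-!
The inverse chart is `x = 1/x₁`, `y = I/x₁ - x₁ y₁`, `z = x₁ z₁`. Substituted into the
chain-rule derivatives of `x₁, y₁, z₁`, it gives Laurent polynomials in `x₁` whose negative
powers cancel; the cancellation uses `I² = -1`, i.e. that the chart is centred on the
direction `y = √-1 · x` at infinity. So the vector field is polynomial in the chart, and each
identity is checked by clearing the denominator `x`.
-/

open Complex

noncomputable section

open MvPolynomial

def chartU₁ (x y z : ℂ) : Fin 3 → ℂ :=
  ![1 / x, -(y - I * x) * x, z * x]

/-- System (1) in the coordinates `(X 0, X 1, X 2) = (x₁, y₁, z₁)` of `chartU₁`. -/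
def fieldU₁ (δ γ : ℂ) : Fin 3 → MvPolynomial (Fin 3) ℂ :=
  ![C (-2) - C (γ + I * δ) * X 0 + C δ * X 1 * X 0 ^ 3 - X 2 * X 0 ^ 3
      - C (4 * I) * X 1 * X 0 ^ 2 + C 2 * X 1 ^ 2 * X 0 ^ 4,
    C (2 * γ) * X 1 + C I * X 2 + C (2 * I) * X 1 ^ 2 * X 0 - C δ * X 1 ^ 2 * X 0 ^ 2
      + X 1 * X 2 * X 0 ^ 2 - C 2 * X 1 ^ 3 * X 0 ^ 3,
    C (γ + I * δ - 2) * X 2 + C (4 * I) * X 1 * X 2 * X 0 - C δ * X 1 * X 2 * X 0 ^ 2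
      + X 2 ^ 2 * X 0 ^ 2 - C 2 * X 1 ^ 2 * X 2 * X 0 ^ 3]

section

variable (δ γ : ℂ) {x y z : ℂ}

theorem eval_chartU₁_fieldU₁_zero (hx : x ≠ 0) :
    eval (chartU₁ x y z) (fieldU₁ δ γ 0) = -(-2 * y ^ 2 + γ * x + δ * y + z) / x ^ 2 := by
  simp only [chartU₁, fieldU₁, Matrix.cons_val, map_add, map_sub, map_mul, map_pow, eval_C, eval_X]
  field_simp
  linear_combination (-2 * x ^ 2) * I_sq

theorem eval_chartU₁_fieldU₁_one (hx : x ≠ 0) :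
    eval (chartU₁ x y z) (fieldU₁ δ γ 1) =
      -((2 * x * y - δ * x + γ * y) - I * (-2 * y ^ 2 + γ * x + δ * y + z)) * x
        + -(y - I * x) * (-2 * y ^ 2 + γ * x + δ * y + z) := by
  simp only [chartU₁, fieldU₁, Matrix.cons_val, map_add, map_sub, map_mul, map_pow, eval_C, eval_X]
  field_simp
  linear_combination x ^ 2 * (2 * y - δ) * I_sq

theorem eval_chartU₁_fieldU₁_two (hx : x ≠ 0) :
    eval (chartU₁ x y z) (fieldU₁ δ γ 2) =
      (-2 * x * z - 2 * z) * x + z * (-2 * y ^ 2 + γ * x + δ * y + z) := by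
  simp only [chartU₁, fieldU₁, Matrix.cons_val, map_add, map_sub, map_mul, map_pow, eval_C, eval_X]
  field_simp
  linear_combination 2 * z * x ^ 2 * I_sq

end

theorem solTWI.hasDerivAt_chartU₁ {δ γ : ℂ} {x y z : ℂ → ℂ} {U : Set ℂ} (h : solTWI δ γ x y z U)
    {t : ℂ} (ht : t ∈ U) (hx : x t ≠ 0) :
    HasDerivAt (fun s => 1 / x s) (eval (chartU₁ (x t) (y t) (z t)) (fieldU₁ δ γ 0)) t ∧
    HasDerivAt (fun s => -(y s - I * x s) * x s)
      (eval (chartU₁ (x t) (y t) (z t)) (fieldU₁ δ γ 1)) t ∧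
    HasDerivAt (fun s => z s * x s) (eval (chartU₁ (x t) (y t) (z t)) (fieldU₁ δ γ 2)) t := by
  obtain ⟨hdx, hdy, hdz⟩ := h t ht
  refine ⟨?_, ?_, ?_⟩
  · rw [eval_chartU₁_fieldU₁_zero δ γ hx]
    simp only [one_div]
    exact hdx.inv hx
  · rw [eval_chartU₁_fieldU₁_one δ γ hx]
    exact (hdy.sub (hdx.const_mul I)).neg.mul hdx
  · rw [eval_chartU₁_fieldU₁_two δ γ hx]
    exact hdz.mul hdx

theorem stmt5_general (δ γ : ℂ) :
    ∃ P₁ P₂ P₃ : MvPolynomial (Fin 3) ℂ,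
      ∀ (U : Set ℂ), IsOpen U → IsConnected U →
      ∀ x y z : ℂ → ℂ, solTWI δ γ x y z U → (∀ t ∈ U, x t ≠ 0) →
      ∀ t ∈ U,
        HasDerivAt (fun s => 1 / x s)
          (MvPolynomial.eval ![1 / x t, -(y t - I * x t) * x t, z t * x t] P₁) t ∧
        HasDerivAt (fun s => -(y s - I * x s) * x s)
          (MvPolynomial.eval ![1 / x t, -(y t - I * x t) * x t, z t * x t] P₂) t ∧
        HasDerivAt (fun s => z s * x s)
          (MvPolynomial.eval ![1 / x t, -(y t - I * x t) * x t, z t * x t] P₃) t :=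
  ⟨fieldU₁ δ γ 0, fieldU₁ δ γ 1, fieldU₁ δ γ 2,
    fun _ _ _ _ _ _ h hx t ht => h.hasDerivAt_chartU₁ ht (hx t ht)⟩

theorem stmt5 (δ γ : ℂ) (hC : γ = 0 ∨ (δ = 0 ∧ γ = -1)) :
    ∃ P₁ P₂ P₃ : MvPolynomial (Fin 3) ℂ,
      ∀ (U : Set ℂ), IsOpen U → IsConnected U →
      ∀ x y z : ℂ → ℂ, solTWI δ γ x y z U → (∀ t ∈ U, x t ≠ 0) →
      ∀ t ∈ U,
        HasDerivAt (fun s => 1 / x s)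
          (MvPolynomial.eval ![1 / x t, -(y t - I * x t) * x t, z t * x t] P₁) t ∧
        HasDerivAt (fun s => -(y s - I * x s) * x s)
          (MvPolynomial.eval ![1 / x t, -(y t - I * x t) * x t, z t * x t] P₂) t ∧
        HasDerivAt (fun s => z s * x s)
          (MvPolynomial.eval ![1 / x t, -(y t - I * x t) * x t, z t * x t] P₃) t :=
  stmt5_general δ γ
end
end

section
/- Let δ, γ ∈ ℂ satisfy condition (C): γ = 0, or (δ, γ) = (0, −1). There exist polynomials P₁, P₂, P₃ ∈ ℂ[X, Y, Z] (depending only on δ, γ) such that for every solution (x, y, z) of the reduced three-wave interaction system (1) on a connected open set U ⊆ ℂ with x nonvanishing, the functions x₃ = 1/x, y₃ = −((y − δ/2)x + δγ/2)x, z₃ = z + x² + 2(γ+1)x satisfy dx₃/dt = P₁(x₃, y₃, z₃), dy₃/dt = P₂(x₃, y₃, z₃), dz₃/dt = P₃(x₃, y₃, z₃) on U. -/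
open Complex

noncomputable section

/-!
Write `(u, v, w)` for the chart coordinates and `q = y (δ - 2y)`. Since
`y = δ/2 - v u² - δγ u / 2` and `x q = y (2uv + δγ)`, a direct computation along a solution gives
`u' = 1 + (γ + 2) u - u² (w + q)`, `v' = -(γ + 4) v + (2uv + δγ/2)(w + q) - δγ x` and
`w' = 2γ w + 2 x q + 2 (γ + 1) q - 2γ(γ + 1) x`.
Everything except the terms `δγ x` and `2γ(γ + 1) x` is polynomial in `(u, v, w)`, and condition (C)
is equivalent to `δγ = 0 = γ(γ + 1)`.
-/

open MvPolynomial

namespace TWI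

variable (δ γ : ℂ)

def chartU3 (x y z : ℂ) : Fin 3 → ℂ :=
  ![1 / x, -((y - δ / 2) * x + δ * γ / 2) * x, z + x ^ 2 + 2 * (γ + 1) * x]

-- `X 0, X 1, X 2` stand for the chart coordinates `u, v, w`.
def yPoly : MvPolynomial (Fin 3) ℂ := C (δ / 2) - X 1 * X 0 ^ 2 - C (δ * γ / 2) * X 0

def xqPoly : MvPolynomial (Fin 3) ℂ := yPoly δ γ * (2 * X 0 * X 1 + C (δ * γ))

def qPoly : MvPolynomial (Fin 3) ℂ := X 0 * xqPoly δ γ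

def fieldU : MvPolynomial (Fin 3) ℂ := 1 + C (γ + 2) * X 0 - X 0 ^ 2 * (X 2 + qPoly δ γ)

def fieldV : MvPolynomial (Fin 3) ℂ :=
  -(C (γ + 4) * X 1) + (2 * X 0 * X 1 + C (δ * γ / 2)) * (X 2 + qPoly δ γ)

def fieldW : MvPolynomial (Fin 3) ℂ :=
  C (2 * γ) * X 2 + 2 * xqPoly δ γ + C (2 * (γ + 1)) * qPoly δ γ

variable {δ γ}

section Eval

variable {x : ℂ} (y z : ℂ)

theorem eval_yPoly (hx : x ≠ 0) : eval (chartU3 δ γ x y z) (yPoly δ γ) = y := by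
  simp only [yPoly, chartU3, map_sub, map_mul, map_pow, eval_C, eval_X, Matrix.cons_val]
  field_simp
  ring

theorem eval_xqPoly (hx : x ≠ 0) :
    eval (chartU3 δ γ x y z) (xqPoly δ γ) = x * (y * (δ - 2 * y)) := by
  simp only [xqPoly, map_mul, eval_yPoly y z hx, map_add, map_ofNat, eval_C]
  simp only [eval_X, chartU3, Matrix.cons_val]
  field_simp
  ring

theorem eval_qPoly (hx : x ≠ 0) : eval (chartU3 δ γ x y z) (qPoly δ γ) = y * (δ - 2 * y) := by
  simp only [qPoly, map_mul, eval_xqPoly y z hx]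
  simp only [eval_X, chartU3, Matrix.cons_val]
  field_simp

end Eval

section Deriv

variable {x y z : ℂ → ℂ} {t : ℂ}

theorem hasDerivAt_chartU (hx : HasDerivAt x (-2 * y t ^ 2 + γ * x t + δ * y t + z t) t)
    (hx0 : x t ≠ 0) :
    HasDerivAt (fun s => 1 / x s) (eval (chartU3 δ γ (x t) (y t) (z t)) (fieldU δ γ)) t := by
  refine ((hasDerivAt_const t (1 : ℂ)).div hx hx0).congr_deriv ?_
  simp only [fieldU, map_add, map_sub, map_mul, map_pow, map_one, eval_C, eval_X,
    eval_qPoly (y t) (z t) hx0]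
  simp only [chartU3, Matrix.cons_val]
  field_simp
  ring

theorem hasDerivAt_chartV (hx : HasDerivAt x (-2 * y t ^ 2 + γ * x t + δ * y t + z t) t)
    (hy : HasDerivAt y (2 * x t * y t - δ * x t + γ * y t) t) (hx0 : x t ≠ 0) :
    HasDerivAt (fun s => -((y s - δ / 2) * x s + δ * γ / 2) * x s)
      (eval (chartU3 δ γ (x t) (y t) (z t)) (fieldV δ γ) - δ * γ * x t) t := by
  refine ((((hy.sub_const (δ / 2)).mul hx).add_const (δ * γ / 2)).neg.mul hx).congr_deriv ?_
  simp only [fieldV, map_add, map_neg, map_mul, map_ofNat, eval_C, eval_X,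
    eval_qPoly (y t) (z t) hx0, Pi.neg_apply, Pi.mul_apply]
  simp only [chartU3, Matrix.cons_val]
  field_simp
  ring

theorem hasDerivAt_chartW (hx : HasDerivAt x (-2 * y t ^ 2 + γ * x t + δ * y t + z t) t)
    (hz : HasDerivAt z (-2 * x t * z t - 2 * z t) t) (hx0 : x t ≠ 0) :
    HasDerivAt (fun s => z s + x s ^ 2 + 2 * (γ + 1) * x s)
      (eval (chartU3 δ γ (x t) (y t) (z t)) (fieldW δ γ) - γ * (γ + 1) * (2 * x t)) t := by
  refine ((hz.add (hx.pow 2)).add (hx.const_mul (2 * (γ + 1)))).congr_deriv ?_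
  simp only [fieldW, map_add, map_mul, map_ofNat, eval_C, eval_X,
    eval_qPoly (y t) (z t) hx0, eval_xqPoly (y t) (z t) hx0]
  simp only [chartU3, Matrix.cons_val]
  ring

end Deriv

end TWI

open TWI in
theorem stmt7 (δ γ : ℂ) (hC : γ = 0 ∨ (δ = 0 ∧ γ = -1)) :
    ∃ P₁ P₂ P₃ : MvPolynomial (Fin 3) ℂ,
      ∀ (U : Set ℂ), IsOpen U → IsConnected U →
      ∀ x y z : ℂ → ℂ, solTWI δ γ x y z U → (∀ t ∈ U, x t ≠ 0) →
      ∀ t ∈ U,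
        HasDerivAt (fun s => 1 / x s)
          (MvPolynomial.eval ![1 / x t, -((y t - δ / 2) * x t + δ * γ / 2) * x t, z t + (x t) ^ 2 + 2 * (γ + 1) * x t] P₁) t ∧
        HasDerivAt (fun s => -((y s - δ / 2) * x s + δ * γ / 2) * x s)
          (MvPolynomial.eval ![1 / x t, -((y t - δ / 2) * x t + δ * γ / 2) * x t, z t + (x t) ^ 2 + 2 * (γ + 1) * x t] P₂) t ∧
        HasDerivAt (fun s => z s + (x s) ^ 2 + 2 * (γ + 1) * x s)
          (MvPolynomial.eval ![1 / x t, -((y t - δ / 2) * x t + δ * γ / 2) * x t, z t + (x t) ^ 2 + 2 * (γ + 1) * x t] P₃) t := by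
  have hδγ : δ * γ = 0 := by rcases hC with rfl | ⟨rfl, -⟩ <;> ring
  have hγγ : γ * (γ + 1) = 0 := by rcases hC with rfl | ⟨-, rfl⟩ <;> ring
  refine ⟨fieldU δ γ, fieldV δ γ, fieldW δ γ, fun U _ _ x y z hsol hx0 t ht => ?_⟩
  obtain ⟨hx, hy, hz⟩ := hsol t ht
  exact ⟨hasDerivAt_chartU hx (hx0 t ht),
    (hasDerivAt_chartV hx hy (hx0 t ht)).congr_deriv (sub_eq_self.mpr (by rw [hδγ, zero_mul])),
    (hasDerivAt_chartW hx hz (hx0 t ht)).congr_deriv (sub_eq_self.mpr (by rw [hγγ, zero_mul]))⟩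
end
end

section
/- Let δ, γ ∈ ℂ. Define the three maps on {(x,y,z) ∈ ℂ³ : x ≠ 0}: ψ₁(x,y,z) = (1/x, −(y − √−1·x)x, zx), ψ₂(x,y,z) = (1/x, −(y + √−1·x)x, zx), ψ₃(x,y,z) = (1/x, −((y − δ/2)x + δγ/2)x, z + x² + 2(γ+1)x). Then for each i = 1, 2, 3 and every (x,y,z) with x ≠ 0, the determinant of the Jacobian matrix of ψᵢ at (x,y,z) equals 1; equivalently, ψᵢ pulls back the volume form dx∧dy∧dz to dx∧dy∧dz. -/
/-!
Each of the three maps has the form `(x, y, z) ↦ (u x, v x * y + p x, w x * z + q x)`, so its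
Jacobian matrix is lower triangular with determinant `u'(x) v(x) w(x)`. Here `u x = x⁻¹`, and
this product is `(-1/x²)(-x)(x) = 1` for `ψ₁, ψ₂` and `(-1/x²)(-x²)(1) = 1` for `ψ₃`.
-/

open Complex

section
variable {𝕜 : Type*} [NontriviallyNormedField 𝕜]

theorem hasFDerivAt_vecCons₃ {f₀ f₁ f₂ : (Fin 3 → 𝕜) → 𝕜} {L₀ L₁ L₂ : (Fin 3 → 𝕜) →L[𝕜] 𝕜}
    {x : Fin 3 → 𝕜} (h₀ : HasFDerivAt f₀ L₀ x) (h₁ : HasFDerivAt f₁ L₁ x)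
    (h₂ : HasFDerivAt f₂ L₂ x) :
    HasFDerivAt (fun Q => ![f₀ Q, f₁ Q, f₂ Q]) (ContinuousLinearMap.pi ![L₀, L₁, L₂]) x := by
  refine hasFDerivAt_pi.2 fun i => ?_
  fin_cases i
  exacts [h₀, h₁, h₂]

theorem exists_hasFDerivAt_det_eq_of_triangular {F : (Fin 3 → 𝕜) → Fin 3 → 𝕜}
    {u v p w q : 𝕜 → 𝕜} {u' d : 𝕜} {x : Fin 3 → 𝕜}
    (hF : ∀ Q, F Q = ![u (Q 0), v (Q 0) * Q 1 + p (Q 0), w (Q 0) * Q 2 + q (Q 0)])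
    (hu : HasDerivAt u u' (x 0)) (hv : DifferentiableAt 𝕜 v (x 0))
    (hp : DifferentiableAt 𝕜 p (x 0)) (hw : DifferentiableAt 𝕜 w (x 0))
    (hq : DifferentiableAt 𝕜 q (x 0)) (hd : u' * v (x 0) * w (x 0) = d) :
    ∃ L : (Fin 3 → 𝕜) →L[𝕜] (Fin 3 → 𝕜), HasFDerivAt F L x ∧
      Matrix.det (Matrix.of fun i j => L (Pi.single j 1) i) = d := by
  have hcoord (i : Fin 3) := hasFDerivAt_apply (𝕜 := 𝕜) i x
  have hcomp {g : 𝕜 → 𝕜} (hg : DifferentiableAt 𝕜 g (x 0)) :=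
    hg.hasDerivAt.comp_hasFDerivAt x (hcoord 0)
  rw [show F = _ from funext hF, ← hd]
  refine ⟨_, hasFDerivAt_vecCons₃ (hu.comp_hasFDerivAt x (hcoord 0))
    (((hcomp hv).mul (hcoord 1)).add (hcomp hp)) (((hcomp hw).mul (hcoord 2)).add (hcomp hq)), ?_⟩
  simp [Matrix.det_fin_three]

end

theorem stmt8 (δ γ : ℂ) :
    ∀ P : Fin 3 → ℂ, P 0 ≠ 0 →
      (∃ L : (Fin 3 → ℂ) →L[ℂ] (Fin 3 → ℂ),
        HasFDerivAt (fun Q : Fin 3 → ℂ =>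
          ![1 / Q 0, -(Q 1 - I * Q 0) * Q 0, Q 2 * Q 0]) L P ∧
        Matrix.det (Matrix.of fun i j => L (Pi.single j 1) i) = 1) ∧
      (∃ L : (Fin 3 → ℂ) →L[ℂ] (Fin 3 → ℂ),
        HasFDerivAt (fun Q : Fin 3 → ℂ =>
          ![1 / Q 0, -(Q 1 + I * Q 0) * Q 0, Q 2 * Q 0]) L P ∧
        Matrix.det (Matrix.of fun i j => L (Pi.single j 1) i) = 1) ∧
      (∃ L : (Fin 3 → ℂ) →L[ℂ] (Fin 3 → ℂ),
        HasFDerivAt (fun Q : Fin 3 → ℂ =>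
          ![1 / Q 0, -((Q 1 - δ / 2) * Q 0 + δ * γ / 2) * Q 0,
            Q 2 + (Q 0) ^ 2 + 2 * (γ + 1) * Q 0]) L P ∧
        Matrix.det (Matrix.of fun i j => L (Pi.single j 1) i) = 1) := by
  intro P hP
  have hinv : HasDerivAt (·⁻¹) (-(P 0 ^ 2)⁻¹) (P 0) := hasDerivAt_inv hP
  refine ⟨?_, ?_, ?_⟩
  · exact exists_hasFDerivAt_det_eq_of_triangular (v := fun t => -t) (p := fun t => I * t ^ 2)
      (w := fun t => t) (q := fun _ => 0) (fun Q => by ext i; fin_cases i <;> simp <;> ring)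
      hinv (by fun_prop) (by fun_prop) (by fun_prop) (by fun_prop) (by field_simp)
  · exact exists_hasFDerivAt_det_eq_of_triangular (v := fun t => -t) (p := fun t => -I * t ^ 2)
      (w := fun t => t) (q := fun _ => 0) (fun Q => by ext i; fin_cases i <;> simp <;> ring)
      hinv (by fun_prop) (by fun_prop) (by fun_prop) (by fun_prop) (by field_simp)
  · exact exists_hasFDerivAt_det_eq_of_triangular (v := fun t => -t ^ 2)
      (p := fun t => δ / 2 * t ^ 2 - δ * γ / 2 * t) (w := fun _ => 1)
      (q := fun t => t ^ 2 + 2 * (γ + 1) * t) (fun Q => by ext i; fin_cases i <;> simp <;> ring)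
      hinv (by fun_prop) (by fun_prop) (by fun_prop) (by fun_prop) (by field_simp)
end

section
/- Let α₁, …, α₅ ∈ ℂ. Define on {(x,y,z) ∈ ℂ³ : x ≠ 0} the maps φ₁(x,y,z) = (1/x, −(y − √−1·x + α₁)x, (z + α₂)x), φ₂(x,y,z) = (1/x, −(y + √−1·x + α₃)x, (z + α₄)x), φ₃(x,y,z) = (1/x, −((y − α₅)x − √−1(α₂−α₄)/2)x, z + x² + √−1(α₁−α₃)x). Then for each i = 1, 2, 3 and every (x,y,z) with x ≠ 0, the determinant of the Jacobian matrix of φᵢ at (x,y,z) equals 1; equivalently, φᵢ pulls back the volume form dx∧dy∧dz to dx∧dy∧dz. -/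
/-!
Each `φᵢ` has the shape `(x, y, z) ↦ (1/x, a(x) y + b(x), c(x) z + d(x))`, so its Jacobian matrix
is lower triangular with diagonal `(-1/x², a(x), c(x))`. In all three cases `a(x) c(x) = -x²`
(`a = -x, c = x` for `φ₁, φ₂` and `a = -x², c = 1` for `φ₃`), hence the determinant is `1`.
-/

open Complex

theorem HasFDerivAt.vecCons₃ {𝕜 E F : Type*} [NontriviallyNormedField 𝕜] [NormedAddCommGroup E]
    [NormedSpace 𝕜 E] [NormedAddCommGroup F] [NormedSpace 𝕜 F] {f₀ f₁ f₂ : E → F}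
    {f₀' f₁' f₂' : E →L[𝕜] F} {x : E} (h₀ : HasFDerivAt f₀ f₀' x) (h₁ : HasFDerivAt f₁ f₁' x)
    (h₂ : HasFDerivAt f₂ f₂' x) :
    HasFDerivAt (fun y => ![f₀ y, f₁ y, f₂ y]) (.pi ![f₀', f₁', f₂']) x := by
  refine hasFDerivAt_pi'' fun i => ?_
  rw [ContinuousLinearMap.proj_pi]
  fin_cases i <;> assumption

section Triangular

variable {𝕜 : Type*} [NontriviallyNormedField 𝕜] {a b c d : 𝕜 → 𝕜} {P : Fin 3 → 𝕜}

theorem exists_hasFDerivAt_det_eq_of_triangular_s15 {f : 𝕜 → 𝕜} {f' : 𝕜}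
    (hf : HasDerivAt f f' (P 0)) (ha : DifferentiableAt 𝕜 a (P 0))
    (hb : DifferentiableAt 𝕜 b (P 0)) (hc : DifferentiableAt 𝕜 c (P 0))
    (hd : DifferentiableAt 𝕜 d (P 0)) :
    ∃ L : (Fin 3 → 𝕜) →L[𝕜] (Fin 3 → 𝕜),
      HasFDerivAt (fun Q : Fin 3 → 𝕜 =>
        ![f (Q 0), a (Q 0) * Q 1 + b (Q 0), c (Q 0) * Q 2 + d (Q 0)]) L P ∧
      Matrix.det (Matrix.of fun i j => L (Pi.single j 1) i) = f' * a (P 0) * c (P 0) := by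
  have hx : HasFDerivAt (fun Q : Fin 3 → 𝕜 => Q 0) (.proj (R := 𝕜) 0) P :=
    hasFDerivAt_apply 0 P
  have h₀ := hf.comp_hasFDerivAt P hx
  have h₁ := ((ha.hasDerivAt.comp_hasFDerivAt P hx).mul (hasFDerivAt_apply 1 P)).add
    (hb.hasDerivAt.comp_hasFDerivAt P hx)
  have h₂ := ((hc.hasDerivAt.comp_hasFDerivAt P hx).mul (hasFDerivAt_apply 2 P)).add
    (hd.hasDerivAt.comp_hasFDerivAt P hx)
  refine ⟨_, h₀.vecCons₃ h₁ h₂, ?_⟩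
  simp [Matrix.det_fin_three]

theorem exists_hasFDerivAt_det_eq_one_of_inv_triangular {F : (Fin 3 → 𝕜) → Fin 3 → 𝕜}
    (hP : P 0 ≠ 0)
    (hF : ∀ Q, F Q = ![1 / Q 0, a (Q 0) * Q 1 + b (Q 0), c (Q 0) * Q 2 + d (Q 0)])
    (hac : a (P 0) * c (P 0) = -P 0 ^ 2) (ha : DifferentiableAt 𝕜 a (P 0))
    (hb : DifferentiableAt 𝕜 b (P 0)) (hc : DifferentiableAt 𝕜 c (P 0))
    (hd : DifferentiableAt 𝕜 d (P 0)) :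
    ∃ L : (Fin 3 → 𝕜) →L[𝕜] (Fin 3 → 𝕜),
      HasFDerivAt F L P ∧ Matrix.det (Matrix.of fun i j => L (Pi.single j 1) i) = 1 := by
  have hinv : HasDerivAt (fun x : 𝕜 => 1 / x) (-(P 0 ^ 2)⁻¹) (P 0) := by
    simpa only [one_div] using hasDerivAt_inv hP
  obtain ⟨L, hL, hdet⟩ := exists_hasFDerivAt_det_eq_of_triangular_s15 hinv ha hb hc hd
  refine ⟨L, (funext hF : F = _) ▸ hL, ?_⟩
  rw [hdet, mul_assoc, hac]
  field_simp

end Triangular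

theorem stmt15 (α₁ α₂ α₃ α₄ α₅ : ℂ) :
    ∀ P : Fin 3 → ℂ, P 0 ≠ 0 →
      (∃ L : (Fin 3 → ℂ) →L[ℂ] (Fin 3 → ℂ),
        HasFDerivAt (fun Q : Fin 3 → ℂ =>
          ![1 / Q 0, -(Q 1 - I * Q 0 + α₁) * Q 0, (Q 2 + α₂) * Q 0]) L P ∧
        Matrix.det (Matrix.of fun i j => L (Pi.single j 1) i) = 1) ∧
      (∃ L : (Fin 3 → ℂ) →L[ℂ] (Fin 3 → ℂ),
        HasFDerivAt (fun Q : Fin 3 → ℂ =>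
          ![1 / Q 0, -(Q 1 + I * Q 0 + α₃) * Q 0, (Q 2 + α₄) * Q 0]) L P ∧
        Matrix.det (Matrix.of fun i j => L (Pi.single j 1) i) = 1) ∧
      (∃ L : (Fin 3 → ℂ) →L[ℂ] (Fin 3 → ℂ),
        HasFDerivAt (fun Q : Fin 3 → ℂ =>
          ![1 / Q 0, -((Q 1 - α₅) * Q 0 - I * (α₂ - α₄) / 2) * Q 0,
            Q 2 + (Q 0) ^ 2 + I * (α₁ - α₃) * Q 0]) L P ∧
        Matrix.det (Matrix.of fun i j => L (Pi.single j 1) i) = 1) := by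
  intro P hP
  refine ⟨exists_hasFDerivAt_det_eq_one_of_inv_triangular (a := fun x => -x)
      (b := fun x => (I * x - α₁) * x) (c := id) (d := (α₂ * ·)) hP ?_ ?_ ?_ ?_ ?_ ?_,
    exists_hasFDerivAt_det_eq_one_of_inv_triangular (a := fun x => -x)
      (b := fun x => -(I * x + α₃) * x) (c := id) (d := (α₄ * ·)) hP ?_ ?_ ?_ ?_ ?_ ?_,
    exists_hasFDerivAt_det_eq_one_of_inv_triangular (a := fun x => -x ^ 2)
      (b := fun x => (α₅ * x + I * (α₂ - α₄) / 2) * x) (c := 1)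
      (d := fun x => x ^ 2 + I * (α₁ - α₃) * x) hP ?_ ?_ ?_ ?_ ?_ ?_⟩
  all_goals first
    | fun_prop
    | intro Q; ext i; fin_cases i <;> simp <;> ring
    | simp only [id, Pi.one_apply]; ring
end

section
/- Let δ, γ ∈ ℂ and let (x, y, z) be a solution of the reduced three-wave interaction system (1) on a connected open set U ⊆ ℂ with x(t) ≠ 0 for all t ∈ U. Define p = 1/x, q = y − δ/2, r = z/x² + 1. Then for all t ∈ U: dp/dt = 1 − r − γp + 2p²q(q + δ/2), p·dq/dt = 2q + (γδ/2)p + γpq, and p·dr/dt = 2r + 2(γ+1)p − 2r² − 2(γ+1)pr + 4p²q(q + δ/2)(r − 1). In particular, the linear parts at the origin of the numerators (p·dp/dt, p·dq/dt, p·dr/dt) form a lower-triangular matrix in (p, q, r) with diagonal entries (1, 2, 2) and off-diagonal entries a₂₁ = γδ/2, a₃₁ = 2(γ+1), a₃₂ = 0. -/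
/-!
Along (1), `ṗ = -ẋ/x²`, `q̇ = ẏ` and `ṙ = ż/x² - 2zẋ/x³`. Substituting `x = 1/p`, `y = q + δ/2`,
`z = (r - 1)/p²` turns these into rational functions of `(p, q, r)` whose only pole is a simple
one along `p = 0`; multiplying by `p` leaves polynomial numerators vanishing at the origin, and
their linear parts are read off term by term.
-/

open Complex

noncomputable section

section Coordinates

variable {δ γ : ℂ} {x y z : ℂ → ℂ} {t : ℂ}

theorem hasDerivAt_one_div_of_twi
    (hx' : HasDerivAt x (-2 * (y t) ^ 2 + γ * x t + δ * y t + z t) t) (hx : x t ≠ 0) :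
    HasDerivAt (fun s => 1 / x s)
      (1 - (z t / (x t) ^ 2 + 1) - γ * (1 / x t)
        + 2 * (1 / x t) ^ 2 * (y t - δ / 2) * ((y t - δ / 2) + δ / 2)) t := by
  simp only [one_div]
  refine (hx'.inv hx).congr_deriv ?_
  field_simp
  ring

theorem one_div_mul_deriv_of_twi (hx : x t ≠ 0) :
    (1 / x t) * (2 * x t * y t - δ * x t + γ * y t) =
      2 * (y t - δ / 2) + (γ * δ / 2) * (1 / x t) + γ * (1 / x t) * (y t - δ / 2) := by
  field_simp
  ring

theorem exists_hasDerivAt_div_sq_add_one_of_twi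
    (hx' : HasDerivAt x (-2 * (y t) ^ 2 + γ * x t + δ * y t + z t) t)
    (hz' : HasDerivAt z (-2 * x t * z t - 2 * z t) t) (hx : x t ≠ 0) :
    ∃ d, HasDerivAt (fun s => z s / (x s) ^ 2 + 1) d t ∧
      (1 / x t) * d =
        2 * (z t / (x t) ^ 2 + 1) + 2 * (γ + 1) * (1 / x t)
          - 2 * (z t / (x t) ^ 2 + 1) ^ 2
          - 2 * (γ + 1) * (1 / x t) * (z t / (x t) ^ 2 + 1)
          + 4 * (1 / x t) ^ 2 * (y t - δ / 2) * ((y t - δ / 2) + δ / 2) *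
              ((z t / (x t) ^ 2 + 1) - 1) := by
  refine ⟨_, (hz'.div (hx'.pow 2) (pow_ne_zero 2 hx)).add_const 1, ?_⟩
  simp only [Pi.pow_apply]
  field_simp
  ring

end Coordinates

def numeratorField (δ γ : ℂ) (P : Fin 3 → ℂ) : Fin 3 → ℂ :=
  ![P 0 * (1 - P 2 - γ * P 0 + 2 * (P 0) ^ 2 * P 1 * (P 1 + δ / 2)),
    2 * P 1 + (γ * δ / 2) * P 0 + γ * P 0 * P 1,
    2 * P 2 + 2 * (γ + 1) * P 0 - 2 * (P 2) ^ 2 - 2 * (γ + 1) * P 0 * P 2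
      + 4 * (P 0) ^ 2 * P 1 * (P 1 + δ / 2) * (P 2 - 1)]

def numeratorLinearPart (δ γ : ℂ) : Matrix (Fin 3) (Fin 3) ℂ :=
  !![1, 0, 0; γ * δ / 2, 2, 0; 2 * (γ + 1), 0, 2]

theorem hasFDerivAt_numeratorField_zero (δ γ : ℂ) :
    HasFDerivAt (numeratorField δ γ)
      (Matrix.toLin' (numeratorLinearPart δ γ)).toContinuousLinearMap 0 := by
  have hP (i : Fin 3) : HasFDerivAt (fun P : Fin 3 → ℂ => P i) (ContinuousLinearMap.proj (R := ℂ) i) 0 :=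
    hasFDerivAt_apply i 0
  refine hasFDerivAt_pi'.2 fun i => ?_
  fin_cases i
  · refine ((hP 0).mul ((((hasFDerivAt_const 1 0).sub (hP 2)).sub ((hP 0).const_mul γ)).add
      (((((hP 0).pow 2).const_mul 2).mul (hP 1)).mul ((hP 1).add_const (δ / 2))))).congr_fderiv ?_
    ext v
    simp [numeratorLinearPart, dotProduct, Fin.sum_univ_three]
  · refine ((((hP 1).const_mul 2).add ((hP 0).const_mul (γ * δ / 2))).add
      (((hP 0).const_mul γ).mul (hP 1))).congr_fderiv ?_
    ext v
    simp [numeratorLinearPart, dotProduct, Fin.sum_univ_three, add_comm]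
  · refine ((((((hP 2).const_mul 2).add ((hP 0).const_mul (2 * (γ + 1)))).sub
      (((hP 2).pow 2).const_mul 2)).sub (((hP 0).const_mul (2 * (γ + 1))).mul (hP 2))).add
      ((((((hP 0).pow 2).const_mul 4).mul (hP 1)).mul ((hP 1).add_const (δ / 2))).mul
        ((hP 2).sub_const 1))).congr_fderiv ?_
    ext v
    simp [numeratorLinearPart, dotProduct, Fin.sum_univ_three, add_comm]

theorem stmt17_general (δ γ : ℂ) (U : Set ℂ)
    (x y z : ℂ → ℂ) (hsol : solTWI δ γ x y z U) (hx : ∀ t ∈ U, x t ≠ 0) :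
    (∀ t ∈ U,
      HasDerivAt (fun s => 1 / x s)
        (1 - (z t / (x t) ^ 2 + 1) - γ * (1 / x t)
          + 2 * (1 / x t) ^ 2 * (y t - δ / 2) * ((y t - δ / 2) + δ / 2)) t ∧
      (∃ d, HasDerivAt (fun s => y s - δ / 2) d t ∧
        (1 / x t) * d =
          2 * (y t - δ / 2) + (γ * δ / 2) * (1 / x t)
            + γ * (1 / x t) * (y t - δ / 2)) ∧
      (∃ d, HasDerivAt (fun s => z s / (x s) ^ 2 + 1) d t ∧
        (1 / x t) * d =
          2 * (z t / (x t) ^ 2 + 1) + 2 * (γ + 1) * (1 / x t)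
            - 2 * (z t / (x t) ^ 2 + 1) ^ 2
            - 2 * (γ + 1) * (1 / x t) * (z t / (x t) ^ 2 + 1)
            + 4 * (1 / x t) ^ 2 * (y t - δ / 2) * ((y t - δ / 2) + δ / 2) *
                ((z t / (x t) ^ 2 + 1) - 1))) ∧
    -- the linear part at the origin of the numerator vector field
    (∃ L : (Fin 3 → ℂ) →L[ℂ] (Fin 3 → ℂ),
      HasFDerivAt (fun P : Fin 3 → ℂ =>
        ![P 0 * (1 - P 2 - γ * P 0 + 2 * (P 0) ^ 2 * P 1 * (P 1 + δ / 2)),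
          2 * P 1 + (γ * δ / 2) * P 0 + γ * P 0 * P 1,
          2 * P 2 + 2 * (γ + 1) * P 0 - 2 * (P 2) ^ 2 - 2 * (γ + 1) * P 0 * P 2
            + 4 * (P 0) ^ 2 * P 1 * (P 1 + δ / 2) * (P 2 - 1)]) L 0 ∧
      (Matrix.of fun i j => L (Pi.single j 1) i) =
        !![1, 0, 0; γ * δ / 2, 2, 0; 2 * (γ + 1), 0, 2]) := by
  refine ⟨fun t ht => ?_, _, hasFDerivAt_numeratorField_zero δ γ,
    LinearMap.toMatrix'_toLin' (numeratorLinearPart δ γ)⟩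
  obtain ⟨hx', hy', hz'⟩ := hsol t ht
  exact ⟨hasDerivAt_one_div_of_twi hx' (hx t ht),
    ⟨_, hy'.sub_const (δ / 2), one_div_mul_deriv_of_twi (hx t ht)⟩,
    exists_hasDerivAt_div_sq_add_one_of_twi hx' hz' (hx t ht)⟩

theorem stmt17 (δ γ : ℂ) (U : Set ℂ) (hU : IsOpen U) (hUc : IsConnected U)
    (x y z : ℂ → ℂ) (hsol : solTWI δ γ x y z U) (hx : ∀ t ∈ U, x t ≠ 0) :
    (∀ t ∈ U,
      HasDerivAt (fun s => 1 / x s)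
        (1 - (z t / (x t) ^ 2 + 1) - γ * (1 / x t)
          + 2 * (1 / x t) ^ 2 * (y t - δ / 2) * ((y t - δ / 2) + δ / 2)) t ∧
      (∃ d, HasDerivAt (fun s => y s - δ / 2) d t ∧
        (1 / x t) * d =
          2 * (y t - δ / 2) + (γ * δ / 2) * (1 / x t)
            + γ * (1 / x t) * (y t - δ / 2)) ∧
      (∃ d, HasDerivAt (fun s => z s / (x s) ^ 2 + 1) d t ∧
        (1 / x t) * d =
          2 * (z t / (x t) ^ 2 + 1) + 2 * (γ + 1) * (1 / x t)
            - 2 * (z t / (x t) ^ 2 + 1) ^ 2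
            - 2 * (γ + 1) * (1 / x t) * (z t / (x t) ^ 2 + 1)
            + 4 * (1 / x t) ^ 2 * (y t - δ / 2) * ((y t - δ / 2) + δ / 2) *
                ((z t / (x t) ^ 2 + 1) - 1))) ∧
    -- the linear part at the origin of the numerator vector field
    (∃ L : (Fin 3 → ℂ) →L[ℂ] (Fin 3 → ℂ),
      HasFDerivAt (fun P : Fin 3 → ℂ =>
        ![P 0 * (1 - P 2 - γ * P 0 + 2 * (P 0) ^ 2 * P 1 * (P 1 + δ / 2)),
          2 * P 1 + (γ * δ / 2) * P 0 + γ * P 0 * P 1,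
          2 * P 2 + 2 * (γ + 1) * P 0 - 2 * (P 2) ^ 2 - 2 * (γ + 1) * P 0 * P 2
            + 4 * (P 0) ^ 2 * P 1 * (P 1 + δ / 2) * (P 2 - 1)]) L 0 ∧
      (Matrix.of fun i j => L (Pi.single j 1) i) =
        !![1, 0, 0; γ * δ / 2, 2, 0; 2 * (γ + 1), 0, 2]) :=
  stmt17_general δ γ U x y z hsol hx
end
end
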